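/- For i ≥ j ≥ 0, the number of shortest 8-neighbor paths f8(i,j) from (0,0) to (i,j) satisfies the recurrence f8(i,j) = f8(i−1,j−1) + f8(i−1,j) + f8(i−1,j+1) for i > j ≥ 1, with f8(i,i) = 1 for all i ≥ 0. -/
import Mathlib


/-- Two points of `ℤ²` are 8-neighbors (king moves): distinct and each coordinate differs
by at most 1. -/
def Adj8 (p q : ℤ × ℤ) : Prop :=
  p ≠ q ∧ (p.1 - q.1).natAbs ≤ 1 ∧ (p.2 - q.2).natAbs ≤ 1

/-- `f` is an 8-neighbor path of length `n` from `p` to `q`. -/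
def IsPath8 (n : ℕ) (f : Fin (n + 1) → ℤ × ℤ) (p q : ℤ × ℤ) : Prop :=
  f 0 = p ∧ f (Fin.last n) = q ∧ ∀ t : Fin n, Adj8 (f t.castSucc) (f t.succ)

/-- `f8 i j` : the number of 8-neighbor paths of length `i` from `(0,0)` to `(i,j)`;
for `i ≥ j` this is the number of shortest 8-neighbor paths. -/
noncomputable def f8 (i j : ℕ) : ℕ :=
  Nat.card {f : Fin (i + 1) → ℤ × ℤ // IsPath8 i f (0, 0) ((i : ℤ), (j : ℤ))}

/-- One-dimensional walks with steps in `{-1,0,1}` from `0` to `c`. -/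
def Walk (n : ℕ) (c : ℤ) : Type :=
  {y : Fin (n + 1) → ℤ // y 0 = 0 ∧ y (Fin.last n) = c ∧
    ∀ t : Fin n, (y t.castSucc - y t.succ).natAbs ≤ 1}

lemma walk_abs_le {n : ℕ} {y : Fin (n + 1) → ℤ} (h0 : y 0 = 0)
    (hs : ∀ t : Fin n, (y t.castSucc - y t.succ).natAbs ≤ 1) :
    ∀ t : Fin (n + 1), y t ≤ (t.val : ℤ) ∧ -(t.val : ℤ) ≤ y t := by
  intro t
  induction t using Fin.induction with
  | zero => simp [h0]
  | succ s ih =>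
    have h := hs s
    simp only [Fin.val_succ, Fin.coe_castSucc] at ih ⊢
    omega

lemma walk_ge_back {n : ℕ} {c : ℤ} {y : Fin (n + 1) → ℤ} (hl : y (Fin.last n) = c)
    (hs : ∀ t : Fin n, (y t.castSucc - y t.succ).natAbs ≤ 1) :
    ∀ t : Fin (n + 1), c - ((n : ℤ) - (t.val : ℤ)) ≤ y t := by
  intro t
  induction t using Fin.reverseInduction with
  | last => simp [hl]
  | cast s ih =>
    have h := hs s
    simp only [Fin.val_succ, Fin.coe_castSucc] at ih ⊢
    omega

/-- In a walk from `0` to `n` of length `n`, every value is forced. -/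
lemma walk_forced {n : ℕ} {y : Fin (n + 1) → ℤ} (h0 : y 0 = 0)
    (hl : y (Fin.last n) = (n : ℤ))
    (hs : ∀ t : Fin n, (y t.castSucc - y t.succ).natAbs ≤ 1) :
    ∀ t : Fin (n + 1), y t = (t.val : ℤ) := by
  intro t
  have h1 := (walk_abs_le h0 hs t).1
  have h2 := walk_ge_back hl hs t
  omega

/-- Paths counted by `f8` correspond to one-dimensional walks. -/
def pathEquiv (i : ℕ) (j : ℤ) :
    {f : Fin (i + 1) → ℤ × ℤ // IsPath8 i f (0, 0) ((i : ℤ), j)} ≃ Walk i j where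
  toFun f := ⟨fun t => (f.1 t).2,
    congrArg Prod.snd f.2.1, congrArg Prod.snd f.2.2.1, fun t => (f.2.2.2 t).2.2⟩
  invFun y := ⟨fun t => ((t.val : ℤ), y.1 t), by
    obtain ⟨z, h0, hl, hs⟩ := y
    refine ⟨by simp [h0], by simp [hl], fun t => ?_⟩
    refine ⟨fun h => ?_, ?_, hs t⟩
    · have := congrArg Prod.fst h
      simp only [Fin.coe_castSucc, Fin.val_succ] at this
      omega
    · simp only [Fin.coe_castSucc, Fin.val_succ]
      push_cast
      omega⟩
  left_inv := by
    rintro ⟨g, h0, hl, hs⟩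
    apply Subtype.ext
    funext t
    have hx : (fun t : Fin (i + 1) => (g t).1) t = (t.val : ℤ) := by
      refine walk_forced (y := fun t : Fin (i + 1) => (g t).1) ?_ ?_ (fun s => (hs s).2.1) t
      · exact congrArg Prod.fst h0
      · exact congrArg Prod.fst hl
    exact Prod.ext hx.symm rfl
  right_inv := by
    rintro ⟨z, h0, hl, hs⟩
    rfl

lemma f8_eq_walk (i j : ℕ) : f8 i j = Nat.card (Walk i (j : ℤ)) :=
  Nat.card_congr (pathEquiv i (j : ℤ))

instance walkFinite (n : ℕ) (c : ℤ) : Finite (Walk n c) := by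
  have key : ∀ (y : Walk n c) (t : Fin (n + 1)), (y.1 t + n).toNat < 2 * n + 1 := by
    intro y t
    have h := walk_abs_le y.2.1 y.2.2.2 t
    have ht : t.val < n + 1 := t.isLt
    omega
  refine Finite.of_injective
    (fun y : Walk n c => fun t : Fin (n + 1) => (⟨(y.1 t + n).toNat, key y t⟩ : Fin (2 * n + 1)))
    ?_
  intro a b hab
  apply Subtype.ext
  funext t
  have := congrFun hab t
  simp only [Fin.mk.injEq] at this
  have ha := walk_abs_le a.2.1 a.2.2.2 t
  have hb := walk_abs_le b.2.1 b.2.2.2 t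
  omega

/-- Restrict a walk of length `n+1` to its first `n+1` points. -/
def restrictWalk {n : ℕ} {c : ℤ} (y : Walk (n + 1) c) (d : ℤ)
    (hd : y.1 (Fin.castSucc (Fin.last n)) = d) : Walk n d :=
  ⟨fun t => y.1 t.castSucc, by
    refine ⟨?_, hd, fun t => ?_⟩
    · exact y.2.1
    · have h := y.2.2.2 t.castSucc
      rwa [Fin.succ_castSucc] at h⟩

/-- Extend a walk of length `n` ending at `v` by one more step to `c`. -/
def extendWalk {n : ℕ} {c : ℤ} (v : ℤ) (h : (v - c).natAbs ≤ 1) (y : Walk n v) :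
    Walk (n + 1) c :=
  ⟨Fin.snoc y.1 c, by
    refine ⟨?_, by simp, fun t => ?_⟩
    · have : (0 : Fin (n + 2)) = Fin.castSucc 0 := rfl
      rw [this, Fin.snoc_castSucc]; exact y.2.1
    · induction t using Fin.lastCases with
      | last =>
        rw [Fin.succ_last, Fin.snoc_castSucc, Fin.snoc_last, y.2.2.1]
        exact h
      | cast s =>
        rw [Fin.succ_castSucc, Fin.snoc_castSucc, Fin.snoc_castSucc]
        exact y.2.2.2 s⟩

lemma extend_restrict {n : ℕ} {c : ℤ} (y : Walk (n + 1) c) (d : ℤ)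
    (hd : y.1 (Fin.castSucc (Fin.last n)) = d) (h : (d - c).natAbs ≤ 1) :
    extendWalk d h (restrictWalk y d hd) = y := by
  apply Subtype.ext
  funext t
  induction t using Fin.lastCases with
  | last => simp [extendWalk, restrictWalk, y.2.2.1]
  | cast s => simp [extendWalk, restrictWalk]

lemma restrict_extend {n : ℕ} {c : ℤ} (v : ℤ) (h : (v - c).natAbs ≤ 1) (y : Walk n v)
    (hd : (extendWalk v h y).1 (Fin.castSucc (Fin.last n)) = v) :
    restrictWalk (extendWalk v h y) v hd = y := by
  apply Subtype.ext
  funext t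
  simp [extendWalk, restrictWalk]

lemma extend_val_last {n : ℕ} {c : ℤ} (v : ℤ) (h : (v - c).natAbs ≤ 1) (y : Walk n v) :
    (extendWalk v h y).1 (Fin.castSucc (Fin.last n)) = v := by
  simp [extendWalk, y.2.2.1]

lemma walk_penult {n : ℕ} {c : ℤ} (y : Walk (n + 1) c) :
    (y.1 (Fin.castSucc (Fin.last n)) - c).natAbs ≤ 1 := by
  have h := y.2.2.2 (Fin.last n)
  rwa [Fin.succ_last, y.2.2.1] at h

/-- A walk of length `n+1` to `c` decomposes according to its penultimate value. -/
def walkEquiv (n : ℕ) (c : ℤ) :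
    Walk (n + 1) c ≃ (Walk n (c - 1) ⊕ Walk n c) ⊕ Walk n (c + 1) where
  toFun y :=
    if h1 : y.1 (Fin.castSucc (Fin.last n)) = c - 1 then
      Sum.inl (Sum.inl (restrictWalk y (c - 1) h1))
    else if h2 : y.1 (Fin.castSucc (Fin.last n)) = c then
      Sum.inl (Sum.inr (restrictWalk y c h2))
    else
      Sum.inr (restrictWalk y (c + 1) (by have := walk_penult y; omega))
  invFun s :=
    match s with
    | Sum.inl (Sum.inl y) => extendWalk (c - 1) (by omega) y
    | Sum.inl (Sum.inr y) => extendWalk c (by omega) y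
    | Sum.inr y => extendWalk (c + 1) (by omega) y
  left_inv := by
    intro y
    dsimp only
    by_cases h1 : y.1 (Fin.castSucc (Fin.last n)) = c - 1
    · rw [dif_pos h1]
      exact extend_restrict y (c - 1) h1 (by omega)
    · rw [dif_neg h1]
      by_cases h2 : y.1 (Fin.castSucc (Fin.last n)) = c
      · rw [dif_pos h2]
        exact extend_restrict y c h2 (by omega)
      · rw [dif_neg h2]
        exact extend_restrict y (c + 1) _ (by omega)
  right_inv := by
    rintro ((y | y) | y) <;> dsimp only
    · rw [dif_pos (extend_val_last (c - 1) (by omega) y)]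
      rw [restrict_extend]
    · rw [dif_neg (by rw [extend_val_last c (by omega) y]; omega),
        dif_pos (extend_val_last c (by omega) y)]
      rw [restrict_extend]
    · rw [dif_neg (by rw [extend_val_last (c + 1) (by omega) y]; omega),
        dif_neg (by rw [extend_val_last (c + 1) (by omega) y]; omega)]
      rw [restrict_extend]

lemma walk_card (n : ℕ) (c : ℤ) :
    Nat.card (Walk (n + 1) c) =
      Nat.card (Walk n (c - 1)) + Nat.card (Walk n c) + Nat.card (Walk n (c + 1)) := by
  rw [Nat.card_congr (walkEquiv n c), Nat.card_sum, Nat.card_sum]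

/-- The number of shortest 8-neighbor paths satisfies
`f8(i,j) = f8(i−1,j−1) + f8(i−1,j) + f8(i−1,j+1)` for `i > j ≥ 1`, with `f8(i,i) = 1`. -/
theorem f8_recurrence :
    (∀ i j : ℕ, j < i → 1 ≤ j →
        f8 i j = f8 (i - 1) (j - 1) + f8 (i - 1) j + f8 (i - 1) (j + 1)) ∧
      ∀ i : ℕ, f8 i i = 1 := by
  constructor
  · intro i j hji hj1
    obtain ⟨m, rfl⟩ : ∃ m, i = m + 1 := ⟨i - 1, by omega⟩
    have e1 : ((j : ℤ)) - 1 = (((j - 1 : ℕ) : ℤ)) := by omega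
    have e2 : ((j : ℤ)) + 1 = (((j + 1 : ℕ) : ℤ)) := by push_cast; ring
    rw [f8_eq_walk, walk_card, e1, e2]
    simp only [Nat.add_sub_cancel]
    rw [← f8_eq_walk, ← f8_eq_walk, ← f8_eq_walk]
  · intro i
    rw [f8_eq_walk]
    rw [Nat.card_eq_one_iff_unique]
    constructor
    · constructor
      intro a b
      apply Subtype.ext
      funext t
      rw [walk_forced a.2.1 a.2.2.1 a.2.2.2 t, walk_forced b.2.1 b.2.2.1 b.2.2.2 t]
    · refine ⟨⟨fun t => (t.val : ℤ), by simp, by simp, fun t => ?_⟩⟩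
      simp only [Fin.coe_castSucc, Fin.val_succ]
      push_cast
      omega
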